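/- arXiv:2601.16812 — 3 statements merged into one kernel-verified Lean document; each statement's English description precedes it below -/
import Mathlib

section
/- Let φ_j : ℝⁿ → ℝ, j = 1,…,N, be differentiable and set φ(x) = (1/N)·Σ_{j=1}^N φ_j(x). Assume φ is L-smooth, φ(x) ≥ φ* for all x ∈ ℝⁿ, and the Strong Growth Condition holds with constant ρ > 0. Fix z⁰ ∈ ℝⁿ, T ∈ ℕ, and η = 1/(ρ·L). For each index sequence σ : {0,…,T−1} → {1,…,N}, define the SGD trajectory z_σ by z_σ(0) = z⁰ and z_σ(t+1) = z_σ(t) − η·∇φ_{σ(t)}(z_σ(t)). Then, averaging uniformly over all N^T index sequences, N^{−T}·Σ_σ Σ_{t=0}^{T−1} ‖∇φ(z_σ(t))‖² ≤ 2·ρ·L·(φ(z⁰) − φ*). -/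
/-!
Smoothness gives the descent inequality `Φ y ≤ Φ x + ⟪∇Φ x, y - x⟫ + L/2 ‖y - x‖²`. Averaged over
the `N` possible steps `x - η ∇φ_j x`, the linear term becomes `-η ‖∇Φ x‖²` because the component
gradients average to `∇Φ x`, and the strong growth condition bounds the quadratic term by
`L ρ η² / 2 ‖∇Φ x‖²`. With `η ρ L = 1` the average of `Φ` after one step is therefore at most
`Φ x - η/2 ‖∇Φ x‖²`. Peeling off the first index of the sequences, this one-step descent
telescopes along the tree of all `N^T` sequences, and `Φ ≥ φ*` at the leaves.
-/

open scoped RealInnerProductSpace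
open Finset

/-- SGD trajectory: `z 0 = z0`, `z (t+1) = z t - η • ∇φ_{σ t} (z t)`. -/
noncomputable def sgdTraj {n N : ℕ} (φ : Fin N → EuclideanSpace ℝ (Fin n) → ℝ)
    (η : ℝ) (z0 : EuclideanSpace ℝ (Fin n)) (σ : ℕ → Fin N) :
    ℕ → EuclideanSpace ℝ (Fin n)
  | 0 => z0
  | t + 1 => sgdTraj φ η z0 σ t - η • gradient (φ (σ t)) (sgdTraj φ η z0 σ t)

section
variable {E : Type*} [NormedAddCommGroup E] [InnerProductSpace ℝ E] [CompleteSpace E]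

theorem le_add_inner_gradient_add_sq_of_lipschitz {Φ : E → ℝ} (hΦ : Differentiable ℝ Φ) {L : ℝ}
    (hLip : ∀ x y, ‖gradient Φ x - gradient Φ y‖ ≤ L * ‖x - y‖) (x y : E) :
    Φ y ≤ Φ x + ⟪gradient Φ x, y - x⟫ + L / 2 * ‖y - x‖ ^ 2 := by
  set v := y - x
  -- The Lipschitz bound makes the derivative of this gap nonpositive for `s ≥ 0`.
  let h : ℝ → ℝ := fun s => Φ (x + s • v) - s * ⟪gradient Φ x, v⟫ - L / 2 * s ^ 2 * ‖v‖ ^ 2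
  have hderiv : ∀ s, HasDerivAt h
      (⟪gradient Φ (x + s • v), v⟫ - ⟪gradient Φ x, v⟫ - L * s * ‖v‖ ^ 2) s := by
    intro s
    have hline : HasDerivAt (fun s : ℝ => x + s • v) v s := by
      simpa using ((hasDerivAt_id s).smul_const v).const_add x
    have hΦs := (hΦ (x + s • v)).hasGradientAt.hasFDerivAt.comp_hasDerivAt s hline
    refine ((hΦs.sub (hasDerivAt_mul_const ⟪gradient Φ x, v⟫)).sub
      (((hasDerivAt_pow 2 s).const_mul (L / 2)).mul_const (‖v‖ ^ 2))).congr_deriv ?_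
    rw [InnerProductSpace.toDual_apply_apply]
    ring
  have hanti : AntitoneOn h (Set.Ici 0) := by
    refine antitoneOn_of_hasDerivWithinAt_nonpos (convex_Ici 0)
      (fun s _ => (hderiv s).continuousAt.continuousWithinAt)
      (fun s _ => (hderiv s).hasDerivWithinAt) fun s hs => ?_
    rw [interior_Ici, Set.mem_Ioi] at hs
    have := calc ⟪gradient Φ (x + s • v), v⟫ - ⟪gradient Φ x, v⟫
        = ⟪gradient Φ (x + s • v) - gradient Φ x, v⟫ := (inner_sub_left _ _ _).symm
      _ ≤ ‖gradient Φ (x + s • v) - gradient Φ x‖ * ‖v‖ := real_inner_le_norm _ _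
      _ ≤ L * ‖(x + s • v) - x‖ * ‖v‖ := by gcongr; exact hLip _ _
      _ = L * s * ‖v‖ ^ 2 := by
        rw [add_sub_cancel_left, norm_smul, Real.norm_of_nonneg hs.le]; ring
    linarith
  have h10 : h 1 ≤ h 0 := hanti Set.self_mem_Ici (Set.mem_Ici.2 zero_le_one) zero_le_one
  simp only [h, one_smul, zero_smul, add_zero, one_mul, zero_mul, one_pow, mul_one, sub_zero,
    ne_eq, OfNat.ofNat_ne_zero, not_false_eq_true, zero_pow, mul_zero, v, add_sub_cancel] at h10
  linarith

theorem gradient_const_mul_sum {ι : Type*} (s : Finset ι) (c : ℝ) {f : ι → E → ℝ} {x : E}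
    (hf : ∀ i ∈ s, DifferentiableAt ℝ (f i) x) :
    gradient (fun y => c * ∑ i ∈ s, f i y) x = c • ∑ i ∈ s, gradient (f i) x := by
  refine HasGradientAt.gradient ?_
  rw [hasGradientAt_iff_hasFDerivAt, map_smul, map_sum]
  simp only [toDual_gradient]
  simpa only [Finset.sum_apply] using
    (HasFDerivAt.sum fun i hi => (hf i hi).hasFDerivAt).const_mul c

theorem sgd_step_expected_descent {N : ℕ} (hN : 0 < N) {φ : Fin N → E → ℝ} {Φ : E → ℝ}
    (hΦ : Differentiable ℝ Φ) {L ρ η : ℝ} (hL : 0 ≤ L) (hη : 0 ≤ η) (hηρL : η * (ρ * L) ≤ 1)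
    (hLip : ∀ x y, ‖gradient Φ x - gradient Φ y‖ ≤ L * ‖x - y‖) {x : E}
    (hgrad : gradient Φ x = (1 / N : ℝ) • ∑ j, gradient (φ j) x)
    (hSGC : (1 / N : ℝ) * ∑ j, ‖gradient (φ j) x‖ ^ 2 ≤ ρ * ‖gradient Φ x‖ ^ 2) :
    (1 / N : ℝ) * ∑ j, Φ (x - η • gradient (φ j) x) + η / 2 * ‖gradient Φ x‖ ^ 2 ≤ Φ x := by
  have hdescent : ∀ j, Φ (x - η • gradient (φ j) x) ≤ Φ x
      - η * ⟪gradient Φ x, gradient (φ j) x⟫ + L / 2 * η ^ 2 * ‖gradient (φ j) x‖ ^ 2 := by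
    intro j
    have h := le_add_inner_gradient_add_sq_of_lipschitz hΦ hLip x (x - η • gradient (φ j) x)
    rwa [sub_sub_cancel_left, inner_neg_right, real_inner_smul_right, norm_neg, norm_smul,
      mul_pow, Real.norm_eq_abs, sq_abs, ← sub_eq_add_neg, ← mul_assoc] at h
  have hinner : (1 / N : ℝ) * ∑ j, ⟪gradient Φ x, gradient (φ j) x⟫ = ‖gradient Φ x‖ ^ 2 := by
    rw [← inner_sum, ← real_inner_smul_right, ← hgrad, real_inner_self_eq_norm_sq]
  have hNpos : (0 : ℝ) < N := Nat.cast_pos.2 hN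
  have hsum := sum_le_sum fun j (_ : j ∈ univ) => hdescent j
  rw [sum_add_distrib, sum_sub_distrib, sum_const, card_univ,
    Fintype.card_fin, nsmul_eq_mul, ← mul_sum, ← mul_sum] at hsum
  have hquad : L / 2 * η ^ 2 * ((1 / N : ℝ) * ∑ j, ‖gradient (φ j) x‖ ^ 2)
      ≤ η / 2 * ‖gradient Φ x‖ ^ 2 := calc
    _ ≤ L / 2 * η ^ 2 * (ρ * ‖gradient Φ x‖ ^ 2) := by gcongr
    _ = η * (ρ * L) * (η / 2 * ‖gradient Φ x‖ ^ 2) := by ring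
    _ ≤ η / 2 * ‖gradient Φ x‖ ^ 2 := mul_le_of_le_one_left (by positivity) hηρL
  calc (1 / N : ℝ) * ∑ j, Φ (x - η • gradient (φ j) x) + η / 2 * ‖gradient Φ x‖ ^ 2
      ≤ (1 / N : ℝ) * (N * Φ x - η * ∑ j, ⟪gradient Φ x, gradient (φ j) x⟫
        + L / 2 * η ^ 2 * ∑ j, ‖gradient (φ j) x‖ ^ 2) + η / 2 * ‖gradient Φ x‖ ^ 2 := by
        gcongr
    _ = Φ x - η * ((1 / N : ℝ) * ∑ j, ⟪gradient Φ x, gradient (φ j) x⟫)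
        + L / 2 * η ^ 2 * ((1 / N : ℝ) * ∑ j, ‖gradient (φ j) x‖ ^ 2)
        + η / 2 * ‖gradient Φ x‖ ^ 2 := by
        field_simp
    _ ≤ Φ x := by rw [hinner]; linarith
end

def Fin.extendSeq {α : Type*} {T : ℕ} (d : α) (σ : Fin T → α) (s : ℕ) : α :=
  if h : s < T then σ ⟨s, h⟩ else d

section
variable {n N : ℕ} (φ : Fin N → EuclideanSpace ℝ (Fin n) → ℝ) (η : ℝ) (d : Fin N)

theorem sgdTraj_extendSeq_cons {T : ℕ} (j : Fin N) (τ : Fin T → Fin N)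
    (x : EuclideanSpace ℝ (Fin n)) {t : ℕ} (ht : t ≤ T) :
    sgdTraj φ η x (Fin.extendSeq d (Fin.cons j τ : Fin (T + 1) → Fin N)) (t + 1) =
      sgdTraj φ η (x - η • gradient (φ j) x) (Fin.extendSeq d τ) t := by
  induction t with
  | zero => simp [sgdTraj, Fin.extendSeq]
  | succ t ih =>
    have hσ : Fin.extendSeq d (Fin.cons j τ : Fin (T + 1) → Fin N) (t + 1) =
        Fin.extendSeq d τ t := by
      simp only [Fin.extendSeq, dif_pos (Nat.succ_lt_succ ht), dif_pos (show t < T from ht)]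
      exact Fin.cons_succ (α := fun _ => Fin N) j τ ⟨t, ht⟩
    rw [sgdTraj, ih (by omega), hσ, sgdTraj]

theorem sum_sgdTraj_add_le (V g : EuclideanSpace ℝ (Fin n) → ℝ)
    (hstep : ∀ x, (1 / N : ℝ) * ∑ j, V (x - η • gradient (φ j) x) + g x ≤ V x) (T : ℕ)
    (x : EuclideanSpace ℝ (Fin n)) :
    ∑ σ : Fin T → Fin N, (∑ t ∈ range T, g (sgdTraj φ η x (Fin.extendSeq d σ) t)
        + V (sgdTraj φ η x (Fin.extendSeq d σ) T)) ≤ N ^ T * V x := by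
  induction T generalizing x with
  | zero => simp [sgdTraj]
  | succ T ih =>
    have hN : (0 : ℝ) < N := Nat.cast_pos.2 d.pos
    have hpeel : ∀ j (τ : Fin T → Fin N),
        ∑ t ∈ range (T + 1),
            g (sgdTraj φ η x (Fin.extendSeq d (Fin.cons j τ : Fin (T + 1) → Fin N)) t)
          + V (sgdTraj φ η x (Fin.extendSeq d (Fin.cons j τ : Fin (T + 1) → Fin N)) (T + 1)) =
        g x + (∑ t ∈ range T, g (sgdTraj φ η (x - η • gradient (φ j) x) (Fin.extendSeq d τ) t)
          + V (sgdTraj φ η (x - η • gradient (φ j) x) (Fin.extendSeq d τ) T)) := by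
      intro j τ
      rw [sum_range_succ', sgdTraj_extendSeq_cons φ η d j τ x le_rfl]
      rw [sum_congr rfl fun t ht => by
        rw [sgdTraj_extendSeq_cons φ η d j τ x (mem_range.1 ht).le]]
      simp only [sgdTraj]
      ring
    calc _ = ∑ j, ∑ τ : Fin T → Fin N, (g x + (∑ t ∈ range T,
              g (sgdTraj φ η (x - η • gradient (φ j) x) (Fin.extendSeq d τ) t)
            + V (sgdTraj φ η (x - η • gradient (φ j) x) (Fin.extendSeq d τ) T))) := by
          rw [← (Fin.consEquiv fun _ => Fin N).sum_comp, Fintype.sum_prod_type]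
          exact sum_congr rfl fun j _ => sum_congr rfl fun τ _ => hpeel j τ
      _ ≤ ∑ j, (N ^ T * g x + N ^ T * V (x - η • gradient (φ j) x)) := by
          gcongr with j
          rw [sum_add_distrib, sum_const, card_univ, Fintype.card_fun]
          simp only [Fintype.card_fin, nsmul_eq_mul, Nat.cast_pow]
          linarith [ih (x - η • gradient (φ j) x)]
      _ = N ^ (T + 1) * ((1 / N : ℝ) * ∑ j, V (x - η • gradient (φ j) x) + g x) := by
          rw [sum_add_distrib, sum_const, ← mul_sum, card_univ, Fintype.card_fin, nsmul_eq_mul]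
          field_simp
          ring
      _ ≤ N ^ (T + 1) * V x := by gcongr; exact hstep x

theorem expected_sum_sgdTraj_le (V g : EuclideanSpace ℝ (Fin n) → ℝ) {m : ℝ}
    (hstep : ∀ x, (1 / N : ℝ) * ∑ j, V (x - η • gradient (φ j) x) + g x ≤ V x)
    (hV : ∀ x, m ≤ V x) (T : ℕ) (x : EuclideanSpace ℝ (Fin n)) :
    ((N : ℝ) ^ T)⁻¹ * ∑ σ : Fin T → Fin N, ∑ t ∈ range T,
      g (sgdTraj φ η x (Fin.extendSeq d σ) t) ≤ V x - m := by
  have hN : (0 : ℝ) < N ^ T := pow_pos (Nat.cast_pos.2 d.pos) T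
  have hsum := sum_sgdTraj_add_le φ η d V g hstep T x
  rw [sum_add_distrib] at hsum
  have hm : (N : ℝ) ^ T * m ≤ ∑ σ : Fin T → Fin N, V (sgdTraj φ η x (Fin.extendSeq d σ) T) := by
    simpa [mul_comm] using
      sum_le_sum fun σ (_ : σ ∈ univ) => hV (sgdTraj φ η x (Fin.extendSeq d σ) T)
  rw [inv_mul_le_iff₀ hN]
  linarith
end

theorem stmt5_general {n N : ℕ} (hN : 0 < N)
    (φ : Fin N → EuclideanSpace ℝ (Fin n) → ℝ) (hφj : ∀ j, Differentiable ℝ (φ j))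
    (Φ : EuclideanSpace ℝ (Fin n) → ℝ) (hΦ : Φ = fun x => (1 / N : ℝ) * ∑ j, φ j x)
    (L : ℝ) (hL : 0 < L)
    (hΦLip : ∀ x y, ‖gradient Φ x - gradient Φ y‖ ≤ L * ‖x - y‖)
    (φstar : ℝ) (hbound : ∀ x, φstar ≤ Φ x)
    (ρ : ℝ) (hρ : 0 < ρ)
    (hSGC : ∀ x, (1 / N : ℝ) * ∑ j, ‖gradient (φ j) x‖ ^ 2 ≤ ρ * ‖gradient Φ x‖ ^ 2)
    (z0 : EuclideanSpace ℝ (Fin n)) (T : ℕ)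
    (η : ℝ) (hη : η = 1 / (ρ * L)) :
    ((N : ℝ) ^ T)⁻¹ *
      ∑ σ : Fin T → Fin N, ∑ t ∈ Finset.range T,
        ‖gradient Φ
          (sgdTraj φ η z0 (fun s => if h : s < T then σ ⟨s, h⟩ else ⟨0, hN⟩) t)‖ ^ 2 ≤
      2 * ρ * L * (Φ z0 - φstar) := by
  have hρL : 0 < ρ * L := mul_pos hρ hL
  have hηρL : η * (ρ * L) = 1 := by rw [hη, one_div_mul_cancel hρL.ne']
  have hΦdiff : Differentiable ℝ Φ := hΦ ▸ (Differentiable.fun_sum fun j _ => hφj j).const_mul _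
  have hgrad (x) : gradient Φ x = (1 / N : ℝ) • ∑ j, gradient (φ j) x := by
    rw [hΦ]; exact gradient_const_mul_sum univ _ fun j _ => (hφj j).differentiableAt
  have hdescent (x) := sgd_step_expected_descent hN hΦdiff hL.le
    (by rw [hη]; positivity) hηρL.le hΦLip (hgrad x) (hSGC x)
  have hstep (x) : (1 / N : ℝ) * ∑ j, 2 * ρ * L * Φ (x - η • gradient (φ j) x)
      + ‖gradient Φ x‖ ^ 2 ≤ 2 * ρ * L * Φ x := by
    rw [← mul_sum]
    linear_combination (2 * ρ * L) * hdescent x - ‖gradient Φ x‖ ^ 2 * hηρL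
  calc _ ≤ 2 * ρ * L * Φ z0 - 2 * ρ * L * φstar :=
        expected_sum_sgdTraj_le φ η ⟨0, hN⟩ (fun y => 2 * ρ * L * Φ y)
          (fun y => ‖gradient Φ y‖ ^ 2) hstep (fun x => by gcongr; exact hbound x) T z0
    _ = 2 * ρ * L * (Φ z0 - φstar) := by ring

theorem stmt5 {n N : ℕ} (hN : 0 < N)
    (φ : Fin N → EuclideanSpace ℝ (Fin n) → ℝ) (hφj : ∀ j, Differentiable ℝ (φ j))
    (Φ : EuclideanSpace ℝ (Fin n) → ℝ) (hΦ : Φ = fun x => (1 / N : ℝ) * ∑ j, φ j x)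
    (L : ℝ) (hL : 0 < L) (hΦsmooth : ContDiff ℝ 1 Φ)
    (hΦLip : ∀ x y, ‖gradient Φ x - gradient Φ y‖ ≤ L * ‖x - y‖)
    (φstar : ℝ) (hbound : ∀ x, φstar ≤ Φ x)
    (ρ : ℝ) (hρ : 0 < ρ)
    (hSGC : ∀ x, (1 / N : ℝ) * ∑ j, ‖gradient (φ j) x‖ ^ 2 ≤ ρ * ‖gradient Φ x‖ ^ 2)
    (z0 : EuclideanSpace ℝ (Fin n)) (T : ℕ)
    (η : ℝ) (hη : η = 1 / (ρ * L)) :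
    ((N : ℝ) ^ T)⁻¹ *
      ∑ σ : Fin T → Fin N, ∑ t ∈ Finset.range T,
        ‖gradient Φ
          (sgdTraj φ η z0 (fun s => if h : s < T then σ ⟨s, h⟩ else ⟨0, hN⟩) t)‖ ^ 2 ≤
      2 * ρ * L * (Φ z0 - φstar) :=
  stmt5_general hN φ hφj Φ hΦ L hL hΦLip φstar hbound ρ hρ hSGC z0 T η hη
end

section
/- Let f : ℝⁿ → ℝ and g_i : ℝⁿ → ℝ, i = 1,…,m, be continuously differentiable. For τ > 0 let P_τ(x) = f(x) + (τ/2)·Σ_{i=1}^m max(0, g_i(x))², so that ∇P_τ(x) = ∇f(x) + τ·Σ_{i=1}^m max(0, g_i(x))·∇g_i(x). Let (x^k) ⊆ ℝⁿ converge to x̄, let τ_k → ∞, and suppose ‖∇P_{τ_k}(x^k)‖ → 0. If the E-LICQ holds at x̄ (the gradients ∇g_i(x̄) for i with g_i(x̄) ≥ 0 are linearly independent), then x̄ is feasible: g_i(x̄) ≤ 0 for all i = 1,…,m. -/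
/-!
Since `∇P_τ = ∇f + τ S` with `S(y) = ∑ᵢ max(0, gᵢ y) ∇gᵢ(y)`, the vectors
`S(xᵏ) = (∇P_{τₖ}(xᵏ) - ∇f(xᵏ)) / τₖ` tend to `0`, because the numerator converges and `τₖ → ∞`.
By continuity `S(xᵏ) → S(x̄)`, so `S(x̄) = 0`. Only indices with `gᵢ(x̄) ≥ 0` contribute to
`S(x̄)`, and E-LICQ then forces `max(0, gᵢ(x̄)) = 0` for every `i`.
-/

open Filter Topology InnerProductSpace Asymptotics
open scoped Gradient

theorem hasDerivAt_max_zero_sq (t : ℝ) :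
    HasDerivAt (fun s : ℝ => max 0 s ^ 2) (2 * max 0 t) t := by
  rcases lt_trichotomy t 0 with ht | rfl | ht
  · have hloc : (fun s : ℝ => max 0 s ^ 2) =ᶠ[𝓝 t] fun _ => 0 := by
      filter_upwards [gt_mem_nhds ht] with s hs
      simp [hs.le]
    simpa [ht.le] using (hasDerivAt_const t (0 : ℝ)).congr_of_eventuallyEq hloc
  · rw [hasDerivAt_iff_isLittleO_nhds_zero]
    simp only [max_self, ne_eq, OfNat.ofNat_ne_zero, not_false_eq_true, zero_pow, zero_add,
      sub_zero, mul_zero]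
    refine IsBigO.trans_isLittleO (g := fun s : ℝ => s ^ 2) ?_ (isLittleO_pow_id one_lt_two)
    refine IsBigO.of_bound 1 (Eventually.of_forall fun s => ?_)
    rcases le_total s 0 with hs | hs <;> simp [hs, sq_nonneg]
  · have hloc : (fun s : ℝ => max 0 s ^ 2) =ᶠ[𝓝 t] fun s => s ^ 2 := by
      filter_upwards [lt_mem_nhds ht] with s hs
      simp [hs.le]
    simpa [ht.le] using (hasDerivAt_pow 2 t).congr_of_eventuallyEq hloc

section Gradient

variable {E : Type*} [NormedAddCommGroup E] [InnerProductSpace ℝ E] [CompleteSpace E]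

theorem hasGradientAt_penalty {ι : Type*} [Fintype ι] {f : E → ℝ} {g : ι → E → ℝ} {y : E}
    (hf : DifferentiableAt ℝ f y) (hg : ∀ i, DifferentiableAt ℝ (g i) y) (t : ℝ) :
    HasGradientAt (fun z => f z + (t / 2) * ∑ i, max 0 (g i z) ^ 2)
      (∇ f y + t • ∑ i, max 0 (g i y) • ∇ (g i) y) y := by
  have hsq (i : ι) := (hasDerivAt_max_zero_sq (g i y)).comp_hasFDerivAt y (hg i).hasFDerivAt
  have h := hf.hasFDerivAt.add
    ((HasFDerivAt.fun_sum (u := Finset.univ) fun i _ => hsq i).const_mul (t / 2))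
  refine h.congr_fderiv ?_
  simp only [map_add, map_smul, map_sum, toDual_gradient, Finset.smul_sum, smul_smul]
  congr 2 with i
  ring_nf

theorem ContDiff.continuous_gradient {u : E → ℝ} (hu : ContDiff ℝ 1 u) : Continuous (∇ u) :=
  (toDual ℝ E).symm.continuous.comp (hu.continuous_fderiv one_ne_zero)

end Gradient

theorem tendsto_zero_of_tendsto_smul {F : Type*} [NormedAddCommGroup F] [NormedSpace ℝ F]
    {α : Type*} {l : Filter α} {τ : α → ℝ} {v : α → F} {w : F}
    (hτ : Tendsto τ l atTop) (hv : Tendsto (fun k => τ k • v k) l (𝓝 w)) :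
    Tendsto v l (𝓝 0) := by
  have h := hτ.inv_tendsto_atTop.smul hv
  rw [zero_smul] at h
  refine h.congr' ?_
  filter_upwards [hτ.eventually_ne_atTop 0] with k hk
  simp [smul_smul, inv_mul_cancel₀ hk]

theorem nonpos_of_sum_max_zero_smul_eq_zero {ι M : Type*} [Fintype ι] [AddCommGroup M]
    [Module ℝ M] {c : ι → ℝ} {v : ι → M}
    (hv : LinearIndependent ℝ fun i : {i // 0 ≤ c i} => v i)
    (hsum : ∑ i, max 0 (c i) • v i = 0) (i : ι) : c i ≤ 0 := by
  by_contra! hi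
  have hsub : ∑ i : {i // 0 ≤ c i}, max 0 (c i) • v i = 0 := by
    rw [← hsum, ← Finset.sum_subtype _ (fun j => Finset.mem_filter_univ j)
      (fun j => max 0 (c j) • v j)]
    refine Finset.sum_filter_of_ne fun j _ hj => ?_
    by_contra! hneg
    simp [hneg.le] at hj
  have hci := Fintype.linearIndependent_iff.mp hv _ hsub ⟨i, hi.le⟩
  exact hi.ne' (by simpa [hi.le] using hci)

theorem stmt10_general {n m : ℕ} (f : EuclideanSpace ℝ (Fin n) → ℝ)
    (g : Fin m → EuclideanSpace ℝ (Fin n) → ℝ)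
    (hf : ContDiff ℝ 1 f) (hg : ∀ i, ContDiff ℝ 1 (g i))
    (P : ℝ → EuclideanSpace ℝ (Fin n) → ℝ)
    (hP : P = fun τ x => f x + (τ / 2) * ∑ i, max 0 (g i x) ^ 2)
    (x : ℕ → EuclideanSpace ℝ (Fin n)) (xbar : EuclideanSpace ℝ (Fin n))
    (hx : Tendsto x atTop (nhds xbar))
    (τ : ℕ → ℝ) (hτ : Tendsto τ atTop atTop)
    (hgrad : Tendsto (fun k => ‖gradient (P (τ k)) (x k)‖) atTop (nhds 0))
    (hELICQ : LinearIndependent ℝ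
      (fun i : {i : Fin m // 0 ≤ g i xbar} => gradient (g i.1) xbar)) :
    ∀ i, g i xbar ≤ 0 := by
  set S := fun y => ∑ i, max 0 (g i y) • ∇ (g i) y
  have hS : Continuous S := continuous_finsetSum _ fun i _ =>
    (continuous_const.max (hg i).continuous).smul (hg i).continuous_gradient
  have hgradP (k : ℕ) : ∇ (P (τ k)) (x k) = ∇ f (x k) + τ k • S (x k) := by
    subst hP
    exact (hasGradientAt_penalty (hf.differentiable one_ne_zero _)
      (fun i => (hg i).differentiable one_ne_zero _) _).gradient
  have hτS : Tendsto (fun k => τ k • S (x k)) atTop (𝓝 (0 - ∇ f xbar)) := by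
    have := (tendsto_zero_iff_norm_tendsto_zero.mpr hgrad).sub
      ((hf.continuous_gradient.tendsto xbar).comp hx)
    simpa only [hgradP, Function.comp_apply, add_sub_cancel_left] using this
  have hS0 : S xbar = 0 :=
    tendsto_nhds_unique ((hS.tendsto xbar).comp hx) (tendsto_zero_of_tendsto_smul hτ hτS)
  exact nonpos_of_sum_max_zero_smul_eq_zero (c := fun i => g i xbar) (v := fun i => ∇ (g i) xbar)
    hELICQ hS0

theorem stmt10 {n m : ℕ} (f : EuclideanSpace ℝ (Fin n) → ℝ)
    (g : Fin m → EuclideanSpace ℝ (Fin n) → ℝ)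
    (hf : ContDiff ℝ 1 f) (hg : ∀ i, ContDiff ℝ 1 (g i))
    (P : ℝ → EuclideanSpace ℝ (Fin n) → ℝ)
    (hP : P = fun τ x => f x + (τ / 2) * ∑ i, max 0 (g i x) ^ 2)
    (x : ℕ → EuclideanSpace ℝ (Fin n)) (xbar : EuclideanSpace ℝ (Fin n))
    (hx : Tendsto x atTop (nhds xbar))
    (τ : ℕ → ℝ) (hτpos : ∀ k, 0 < τ k) (hτ : Tendsto τ atTop atTop)
    (hgrad : Tendsto (fun k => ‖gradient (P (τ k)) (x k)‖) atTop (nhds 0))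
    (hELICQ : LinearIndependent ℝ
      (fun i : {i : Fin m // 0 ≤ g i xbar} => gradient (g i.1) xbar)) :
    ∀ i, g i xbar ≤ 0 :=
  stmt10_general f g hf hg P hP x xbar hx τ hτ hgrad hELICQ
end

section
/- Let f : ℝⁿ → ℝ and g_i : ℝⁿ → ℝ, i = 1,…,m, be continuously differentiable. Let (x^k) ⊆ ℝⁿ converge to x̄, let τ_k → ∞, and suppose ‖∇f(x^k) + τ_k·Σ_{i=1}^m max(0, g_i(x^k))·∇g_i(x^k)‖ → 0. If the E-LICQ holds at x̄ (the gradients ∇g_i(x̄) for i with g_i(x̄) ≥ 0 are linearly independent), then x̄ is a KKT point of the problem min f(x) s.t. g_i(x) ≤ 0, i = 1,…,m: there exist multipliers λ ∈ ℝᵐ with λ_i ≥ 0 for all i, ∇f(x̄) + Σ_{i=1}^m λ_i·∇g_i(x̄) = 0, g_i(x̄) ≤ 0 for all i, and λ_i·g_i(x̄) = 0 for all i. -/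
/-!
Constraints with `g i xbar < 0` are eventually strictly satisfied along `x k`, so they drop out
of the penalty gradient. The remaining gradients `∇g_i(x k)` converge to the linearly independent
family `∇g_i(xbar)` and their combination with coefficients `τ k * max 0 (g i (x k))` converges
to `-∇f(xbar)`; linear independence forces these coefficients to converge, and their limits are
the multipliers. They are nonnegative as limits of nonnegative numbers, and since `τ k → ∞`
the convergence of `τ k * max 0 (g i (x k))` forces `max 0 (g i xbar) = 0`, i.e. feasibility,
which makes every remaining constraint active and gives complementary slackness.
-/

open Filter Topology

theorem ContDiff.continuous_gradient_s12 {𝕜 F : Type*} [RCLike 𝕜] [NormedAddCommGroup F]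
    [InnerProductSpace 𝕜 F] [CompleteSpace F] {f : F → 𝕜} (hf : ContDiff 𝕜 1 f) :
    Continuous (gradient f) :=
  (InnerProductSpace.toDual 𝕜 F).symm.continuous.comp (hf.continuous_fderiv one_ne_zero)

theorem Fintype.sum_subtype_eq_sum_of_eq_zero {ι M : Type*} [Fintype ι] [AddCommMonoid M]
    {p : ι → Prop} [DecidablePred p] (f : ι → M) (hf : ∀ i, ¬p i → f i = 0) :
    ∑ i : {i // p i}, f i = ∑ i, f i := by
  rw [← Fintype.sum_subtype_add_sum_subtype p f,
    Fintype.sum_eq_zero _ fun i : {i // ¬p i} ↦ hf i i.2, add_zero]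

theorem Filter.Tendsto.tendsto_zero_of_tendsto_mul {α : Type*} {l : Filter α} {τ b : α → ℝ}
    {μ : ℝ} (hτ : Tendsto τ l atTop) (h : Tendsto (fun k ↦ τ k * b k) l (𝓝 μ)) :
    Tendsto b l (𝓝 0) :=
  h.div_atTop hτ |>.congr' <| (hτ.eventually_ne_atTop 0).mono fun k hk ↦
    mul_div_cancel_left₀ (b k) hk

theorem le_zero_of_tendsto_mul_max {α : Type*} {l : Filter α} [l.NeBot] {τ a : α → ℝ}
    {a₀ μ : ℝ} (hτ : Tendsto τ l atTop) (ha : Tendsto a l (𝓝 a₀))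
    (h : Tendsto (fun k ↦ τ k * max 0 (a k)) l (𝓝 μ)) : a₀ ≤ 0 :=
  max_eq_left_iff.1 <| tendsto_nhds_unique
    (((continuous_const.max continuous_id).tendsto a₀).comp ha) (hτ.tendsto_zero_of_tendsto_mul h)

theorem eventually_smul_sum_max_smul_eq_sum_subtype {α ι E : Type*} [Fintype ι] [AddCommGroup E]
    [Module ℝ E] {l : Filter α} {a : α → ι → ℝ} {a₀ : ι → ℝ}
    (ha : ∀ i, Tendsto (fun k ↦ a k i) l (𝓝 (a₀ i))) (τ : α → ℝ) (v : α → ι → E) :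
    ∀ᶠ k in l, τ k • ∑ i, max 0 (a k i) • v k i =
      ∑ i : {i // 0 ≤ a₀ i}, (τ k * max 0 (a k i)) • v k i := by
  have hinactive : ∀ᶠ k in l, ∀ i, a₀ i < 0 → a k i < 0 :=
    eventually_all.2 fun i ↦ by
      by_cases hi : a₀ i < 0
      · exact ((ha i).eventually_lt_const hi).mono fun k hk _ ↦ hk
      · exact Eventually.of_forall fun k h ↦ absurd h hi
  filter_upwards [hinactive] with k hk
  rw [Finset.smul_sum,
    Fintype.sum_subtype_eq_sum_of_eq_zero fun i ↦ (τ k * max 0 (a k i)) • v k i]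
  · simp only [smul_smul]
  · intro i hi
    rw [max_eq_left (hk i (not_le.1 hi)).le, mul_zero, zero_smul]

theorem exists_extend_nonneg_of_subtype {ι E : Type*} [Fintype ι] [AddCommMonoid E] [Module ℝ E]
    {p : ι → Prop} [DecidablePred p] {Λ : {i // p i} → ℝ} (hΛ : ∀ i, 0 ≤ Λ i) (v : ι → E) :
    ∃ lam : ι → ℝ, (∀ i, 0 ≤ lam i) ∧ (∀ i, ¬p i → lam i = 0) ∧
      ∑ i, lam i • v i = ∑ i : {i // p i}, Λ i • v i := by
  refine ⟨fun i ↦ if h : p i then Λ ⟨i, h⟩ else 0, fun i ↦ ?_, fun i hi ↦ dif_neg hi, ?_⟩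
  · dsimp only
    split_ifs
    exacts [hΛ _, le_rfl]
  · dsimp only
    rw [← Fintype.sum_subtype_eq_sum_of_eq_zero (p := p) _
      fun i hi ↦ by rw [dif_neg hi, zero_smul]]
    exact Finset.sum_congr rfl fun i _ ↦ by rw [dif_pos i.2]

section CoefficientLimits

variable {𝕜 E ι α : Type*} [NontriviallyNormedField 𝕜] [NormedAddCommGroup E] [NormedSpace 𝕜 E]

theorem Filter.Tendsto.clm_apply {F : Type*} [NormedAddCommGroup F] [NormedSpace 𝕜 F]
    {l : Filter α} {L : α → E →L[𝕜] F} {y : α → E} {L₀ : E →L[𝕜] F} {y₀ : E}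
    (hL : Tendsto L l (𝓝 L₀)) (hy : Tendsto y l (𝓝 y₀)) :
    Tendsto (fun k ↦ L k (y k)) l (𝓝 (L₀ y₀)) :=
  (isBoundedBilinearMap_apply.continuous.tendsto _).comp (hL.prodMk_nhds hy)

theorem LinearIndependent.tendsto_coeffs_of_tendsto_sum [CompleteSpace 𝕜]
    [FiniteDimensional 𝕜 E] [Fintype ι] {v : ι → E} (hv : LinearIndependent 𝕜 v)
    {l : Filter α} [l.NeBot] {G : α → ι → E} (hG : Tendsto G l (𝓝 v)) {c : α → ι → 𝕜} {w : E}
    (hw : Tendsto (fun k ↦ ∑ i, c k i • G k i) l (𝓝 w)) :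
    ∃ Λ : ι → 𝕜, Tendsto c l (𝓝 Λ) ∧ ∑ i, Λ i • v i = w := by
  classical
  set T := (ContinuousLinearEquiv.piRing (𝕜 := 𝕜) (E := E) ι).symm
  have hT : ∀ G c, T G c = ∑ i, c i • G i := fun G c ↦
    LinearEquiv.piRing_symm_apply (S := 𝕜) G c
  obtain ⟨P, hP⟩ : (T v).HasLeftInverse := .of_injective_of_finiteDimensional <| by
    convert hv.fintypeLinearCombination_injective using 1
    ext a
    simp [hT, Fintype.linearCombination_apply]
  -- `A k → 1` is eventually invertible, and `c k = (A k)⁻¹ (P (∑ i, c k i • G k i))`.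
  set A : α → (ι → 𝕜) →L[𝕜] (ι → 𝕜) := fun k ↦ P.comp (T (G k))
  have hA : Tendsto A l (𝓝 1) := by
    rw [← (ContinuousLinearMap.ext hP : P.comp (T v) = 1)]
    exact ((continuous_const.clm_comp T.continuous).tendsto v).comp hG
  have hAc : Tendsto (fun k ↦ A k (c k)) l (𝓝 (P w)) :=
    ((P.continuous.tendsto w).comp hw).congr fun k ↦ by
      simp only [Function.comp, A, ContinuousLinearMap.comp_apply, hT]
  have hinv : Tendsto (fun k ↦ Ring.inverse (A k)) l (𝓝 1) := by
    have h := (NormedRing.inverse_continuousAt (1 : ((ι → 𝕜) →L[𝕜] (ι → 𝕜))ˣ)).tendsto.comp hA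
    rw [Units.val_one, Ring.inverse_one] at h
    exact h
  have hc : Tendsto c l (𝓝 (P w)) := by
    refine (hinv.clm_apply hAc).congr' ?_
    filter_upwards [hA (Units.isOpen.mem_nhds isUnit_one)] with k hk
    change (Ring.inverse (A k) * A k) (c k) = c k
    rw [Ring.inverse_mul_cancel _ hk]
    rfl
  refine ⟨P w, hc, tendsto_nhds_unique ?_ hw⟩
  simpa [hT] using ((T.continuous.tendsto v).comp hG).clm_apply hc

end CoefficientLimits

theorem stmt12_general {n m : ℕ} (f : EuclideanSpace ℝ (Fin n) → ℝ)
    (g : Fin m → EuclideanSpace ℝ (Fin n) → ℝ)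
    (hf : ContDiff ℝ 1 f) (hg : ∀ i, ContDiff ℝ 1 (g i))
    (x : ℕ → EuclideanSpace ℝ (Fin n)) (xbar : EuclideanSpace ℝ (Fin n))
    (hx : Tendsto x atTop (nhds xbar))
    (τ : ℕ → ℝ) (hτ : Tendsto τ atTop atTop)
    (hgrad : Tendsto
      (fun k => ‖gradient f (x k) + τ k • ∑ i, max 0 (g i (x k)) • gradient (g i) (x k)‖)
      atTop (nhds 0))
    (hELICQ : LinearIndependent ℝ
      (fun i : {i : Fin m // 0 ≤ g i xbar} => gradient (g i.1) xbar)) :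
    ∃ lam : Fin m → ℝ,
      (∀ i, 0 ≤ lam i) ∧
      gradient f xbar + ∑ i, lam i • gradient (g i) xbar = 0 ∧
      (∀ i, g i xbar ≤ 0) ∧
      (∀ i, lam i * g i xbar = 0) := by
  have hgx : ∀ i, Tendsto (fun k ↦ g i (x k)) atTop (𝓝 (g i xbar)) :=
    fun i ↦ ((hg i).continuous.tendsto xbar).comp hx
  have hpenalty : Tendsto (fun k ↦ ∑ i : {i // 0 ≤ g i xbar},
      (τ k * max 0 (g i (x k))) • gradient (g i) (x k)) atTop (𝓝 (-gradient f xbar)) := by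
    have hlim := (tendsto_zero_iff_norm_tendsto_zero.2 hgrad).sub
      ((hf.continuous_gradient_s12.tendsto xbar).comp hx)
    rw [zero_sub] at hlim
    refine hlim.congr' ?_
    filter_upwards [eventually_smul_sum_max_smul_eq_sum_subtype hgx τ
      fun k i ↦ gradient (g i) (x k)] with k hk
    rw [Function.comp_apply, add_sub_cancel_left, hk]
  obtain ⟨Λ, hΛ, hΛsum⟩ := hELICQ.tendsto_coeffs_of_tendsto_sum
    (tendsto_pi_nhds.2 fun i ↦ ((hg i).continuous_gradient_s12.tendsto xbar).comp hx) hpenalty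
  have hΛi := tendsto_pi_nhds.1 hΛ
  have hΛ_nonneg : ∀ i, 0 ≤ Λ i := fun i ↦ ge_of_tendsto (hΛi i) <|
    (hτ.eventually_ge_atTop 0).mono fun k hk ↦ mul_nonneg hk (le_max_left _ _)
  have hfeas : ∀ i, g i xbar ≤ 0 := fun i ↦ by
    by_contra! hi
    exact hi.not_ge (le_zero_of_tendsto_mul_max hτ (hgx i) (hΛi ⟨i, hi.le⟩))
  obtain ⟨lam, hlam_nonneg, hlam_inactive, hlam_sum⟩ :=
    exists_extend_nonneg_of_subtype hΛ_nonneg fun i ↦ gradient (g i) xbar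
  refine ⟨lam, hlam_nonneg, by rw [hlam_sum, hΛsum, add_neg_cancel], hfeas, fun i ↦ ?_⟩
  by_cases h : 0 ≤ g i xbar
  · rw [le_antisymm (hfeas i) h, mul_zero]
  · rw [hlam_inactive i h, zero_mul]

theorem stmt12 {n m : ℕ} (f : EuclideanSpace ℝ (Fin n) → ℝ)
    (g : Fin m → EuclideanSpace ℝ (Fin n) → ℝ)
    (hf : ContDiff ℝ 1 f) (hg : ∀ i, ContDiff ℝ 1 (g i))
    (x : ℕ → EuclideanSpace ℝ (Fin n)) (xbar : EuclideanSpace ℝ (Fin n))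
    (hx : Tendsto x atTop (nhds xbar))
    (τ : ℕ → ℝ) (hτpos : ∀ k, 0 < τ k) (hτ : Tendsto τ atTop atTop)
    (hgrad : Tendsto
      (fun k => ‖gradient f (x k) + τ k • ∑ i, max 0 (g i (x k)) • gradient (g i) (x k)‖)
      atTop (nhds 0))
    (hELICQ : LinearIndependent ℝ
      (fun i : {i : Fin m // 0 ≤ g i xbar} => gradient (g i.1) xbar)) :
    ∃ lam : Fin m → ℝ,
      (∀ i, 0 ≤ lam i) ∧
      gradient f xbar + ∑ i, lam i • gradient (g i) xbar = 0 ∧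
      (∀ i, g i xbar ≤ 0) ∧
      (∀ i, lam i * g i xbar = 0) :=
  stmt12_general f g hf hg x xbar hx τ hτ hgrad hELICQ
end
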